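/- Robbins–Siegmund lemma: Let (Ω, F, P) be a probability space and (F^k)_{k≥0} an increasing sequence of sub-σ-algebras of F. Suppose a^k, b^k, c^k, ζ^k are finite nonnegative F^k-measurable random variables satisfying E[a^{k+1} | F^k] ≤ (1 + ζ^k) a^k − b^k + c^k for all k ≥ 0, and Σ_{k=0}^∞ c^k < ∞ and Σ_{k=0}^∞ ζ^k < ∞ almost surely. Then lim_{k→∞} a^k exists almost surely (and is finite), and Σ_{k=0}^∞ b^k < ∞ almost surely. -/

import Mathlib

/-!
Dividing by `P k = ∏_{j<k} (1 + ζ j)` removes the factor `1 + ζ k`: the nonnegative process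
`U k = a k / P k + ∑_{j<k} b j / P (j+1)` satisfies `E[U (k+1) | ℱ k] ≤ U k + c k / P (k+1)`.
So `U k - ∑_{j<k} c j / P (j+1)` is a supermartingale bounded below by minus predictable
partial sums that are a.s. bounded. Stopped before these exceed `M`, it is bounded below by `-M`
and converges a.s. by the martingale convergence theorem; letting `M → ∞`, `U` converges a.s.
As `P k` increases to the finite limit `∏' j, (1 + ζ j)`, this forces `∑ b j < ∞` and the
convergence of `a k = (U k - ∑_{j<k} b j / P (j+1)) * P k`.
-/

open MeasureTheory Filter Finset Topology

noncomputable section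

def prodOneAdd (ζ : ℕ → ℝ) (k : ℕ) : ℝ := ∏ j ∈ range k, (1 + ζ j)

def discountedTotal (a b ζ : ℕ → ℝ) (k : ℕ) : ℝ :=
  a k / prodOneAdd ζ k + ∑ j ∈ range k, b j / prodOneAdd ζ (j + 1)

end

section Deterministic

variable {a b ζ : ℕ → ℝ}

theorem prodOneAdd_succ (ζ : ℕ → ℝ) (k : ℕ) :
    prodOneAdd ζ (k + 1) = prodOneAdd ζ k * (1 + ζ k) :=
  prod_range_succ _ _

theorem one_le_prodOneAdd (hζ : ∀ k, 0 ≤ ζ k) (k : ℕ) : 1 ≤ prodOneAdd ζ k :=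
  one_le_prod fun j _ => le_add_of_nonneg_right (hζ j)

theorem prodOneAdd_pos (hζ : ∀ k, 0 ≤ ζ k) (k : ℕ) : 0 < prodOneAdd ζ k :=
  one_pos.trans_le (one_le_prodOneAdd hζ k)

theorem monotone_prodOneAdd (hζ : ∀ k, 0 ≤ ζ k) : Monotone (prodOneAdd ζ) :=
  monotone_nat_of_le_succ fun k => by
    rw [prodOneAdd_succ]
    exact le_mul_of_one_le_right (prodOneAdd_pos hζ k).le (le_add_of_nonneg_right (hζ k))

theorem tendsto_prodOneAdd (hζ : Summable ζ) :
    Tendsto (prodOneAdd ζ) atTop (𝓝 (∏' j, (1 + ζ j))) :=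
  (Real.multipliable_one_add_of_summable hζ).hasProd.tendsto_prod_nat

theorem discountedTotal_nonneg (ha : ∀ k, 0 ≤ a k) (hb : ∀ k, 0 ≤ b k) (hζ : ∀ k, 0 ≤ ζ k)
    (k : ℕ) : 0 ≤ discountedTotal a b ζ k :=
  add_nonneg (div_nonneg (ha k) (prodOneAdd_pos hζ k).le)
    (sum_nonneg fun j _ => div_nonneg (hb j) (prodOneAdd_pos hζ _).le)

theorem Summable.div_prodOneAdd (hb : ∀ k, 0 ≤ b k) (hζ : ∀ k, 0 ≤ ζ k) (hbs : Summable b) :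
    Summable fun j => b j / prodOneAdd ζ (j + 1) :=
  hbs.of_nonneg_of_le (fun j => div_nonneg (hb j) (prodOneAdd_pos hζ _).le)
    fun j => div_le_self (hb j) (one_le_prodOneAdd hζ _)

theorem summable_div_prodOneAdd_of_bddAbove (ha : ∀ k, 0 ≤ a k) (hb : ∀ k, 0 ≤ b k)
    (hζ : ∀ k, 0 ≤ ζ k) (hbdd : BddAbove (Set.range (discountedTotal a b ζ))) :
    Summable fun j => b j / prodOneAdd ζ (j + 1) := by
  obtain ⟨C, hC⟩ := hbdd
  refine summable_of_sum_range_le (fun j => div_nonneg (hb j) (prodOneAdd_pos hζ _).le)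
    fun k => le_trans ?_ (hC ⟨k, rfl⟩)
  exact le_add_of_nonneg_left (div_nonneg (ha k) (prodOneAdd_pos hζ k).le)

theorem summable_of_summable_div_prodOneAdd (hb : ∀ k, 0 ≤ b k) (hζ : ∀ k, 0 ≤ ζ k)
    (hζs : Summable ζ) (hdisc : Summable fun j => b j / prodOneAdd ζ (j + 1)) :
    Summable b := by
  refine (hdisc.mul_right (∏' j, (1 + ζ j))).of_nonneg_of_le hb fun j => ?_
  rw [div_mul_eq_mul_div, le_div_iff₀ (prodOneAdd_pos hζ _)]
  exact mul_le_mul_of_nonneg_left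
    ((monotone_prodOneAdd hζ).ge_of_tendsto (tendsto_prodOneAdd hζs) _) (hb j)

theorem tendsto_of_tendsto_discountedTotal (hζ : ∀ k, 0 ≤ ζ k) (hζs : Summable ζ) {l : ℝ}
    (hl : Tendsto (discountedTotal a b ζ) atTop (𝓝 l))
    (hdisc : Summable fun j => b j / prodOneAdd ζ (j + 1)) :
    ∃ l', Tendsto a atTop (𝓝 l') := by
  refine ⟨_, ((hl.sub hdisc.hasSum.tendsto_sum_nat).mul (tendsto_prodOneAdd hζs)).congr
    fun k => ?_⟩
  simp [discountedTotal, div_mul_cancel₀ _ (prodOneAdd_pos hζ k).ne']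

theorem div_prodOneAdd_add_sum_le (hζ : ∀ k, 0 ≤ ζ k) {k : ℕ} {x c : ℝ}
    (hx : x ≤ (1 + ζ k) * a k - b k + c) :
    x / prodOneAdd ζ (k + 1) + ∑ j ∈ range (k + 1), b j / prodOneAdd ζ (j + 1) ≤
      discountedTotal a b ζ k + c / prodOneAdd ζ (k + 1) := by
  have hP := prodOneAdd_pos hζ k
  have hζk : 0 < 1 + ζ k := by linarith [hζ k]
  have hx' := div_le_div_of_nonneg_right hx (prodOneAdd_pos hζ (k + 1)).le
  rw [discountedTotal, sum_range_succ, prodOneAdd_succ]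
  rw [prodOneAdd_succ] at hx'
  field_simp at hx' ⊢
  linarith

end Deterministic

namespace MeasureTheory

variable {Ω : Type*} {m0 : MeasurableSpace Ω} {μ : Measure Ω} {ℱ : Filtration ℕ m0}

theorem Supermartingale.exists_ae_tendsto_of_nonneg [IsFiniteMeasure μ] {X : ℕ → Ω → ℝ}
    (hX : Supermartingale X ℱ μ) (hX_nonneg : ∀ k ω, 0 ≤ X k ω) :
    ∀ᵐ ω ∂μ, ∃ l, Tendsto (fun k => X k ω) atTop (𝓝 l) := by
  have hL1 (k : ℕ) : eLpNorm ((-X) k) 1 μ ≤ ENNReal.ofReal (∫ ω, X 0 ω ∂μ) := by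
    rw [Pi.neg_apply, eLpNorm_neg, eLpNorm_one_eq_lintegral_enorm,
      ← ofReal_integral_norm_eq_lintegral_enorm (hX.integrable k)]
    refine ENNReal.ofReal_le_ofReal ?_
    simpa [Real.norm_of_nonneg (hX_nonneg k _)] using
      hX.setIntegral_le (Nat.zero_le k) MeasurableSet.univ
  filter_upwards [hX.neg.exists_ae_tendsto_of_bdd hL1] with ω ⟨l, hl⟩
  exact ⟨-l, by simpa using hl.neg⟩

theorem Supermartingale.stoppedProcess [SigmaFiniteFiltration μ ℱ] {X : ℕ → Ω → ℝ}
    {τ : Ω → ℕ∞} (hX : Supermartingale X ℱ μ) (hτ : IsStoppingTime ℱ τ) :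
    Supermartingale (MeasureTheory.stoppedProcess X τ) ℱ μ := by
  have hneg : MeasureTheory.stoppedProcess X τ = -(MeasureTheory.stoppedProcess (-X) τ) := by
    ext; simp [MeasureTheory.stoppedProcess]
  exact hneg ▸ (hX.neg.stoppedProcess hτ).neg

theorem exists_stoppedProcess_eq {ι β : Type*} [LinearOrder ι] [Nonempty ι] (u : ι → Ω → β)
    (τ : Ω → WithTop ι) (i : ι) (ω : Ω) :
    ∃ j : ι, (j : WithTop ι) ≤ τ ω ∧ MeasureTheory.stoppedProcess u τ i ω = u j ω := by
  rcases le_total (i : WithTop ι) (τ ω) with hi | hτ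
  · exact ⟨i, hi, stoppedProcess_eq_of_le hi⟩
  · obtain ⟨j, hj⟩ := WithTop.ne_top_iff_exists.1 (ne_top_of_le_ne_top WithTop.coe_ne_top hτ)
    exact ⟨j, hj.le, by rw [stoppedProcess_eq_of_ge hτ, ← hj]; simp⟩

theorem Supermartingale.exists_ae_tendsto_of_neg_sum_le [IsFiniteMeasure μ]
    {X d : ℕ → Ω → ℝ} (hX : Supermartingale X ℱ μ) (hd : Adapted ℱ d)
    (hXd : ∀ k ω, -∑ j ∈ range k, d j ω ≤ X k ω)
    (hbdd : ∀ᵐ ω ∂μ, BddAbove (Set.range fun k => ∑ j ∈ range k, d j ω)) :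
    ∀ᵐ ω ∂μ, ∃ l, Tendsto (fun k => X k ω) atTop (𝓝 l) := by
  -- `τ M` is the first `k` with `∑_{j ≤ k} d j > M`; it is a stopping time as that sum is
  -- `ℱ k`-measurable, and up to it the partial sums of `d`, hence `-X`, stay below `M`.
  set τ : ℕ → Ω → ℕ∞ := fun M =>
    hittingAfter (fun k ω => ∑ j ∈ range (k + 1), d j ω) (Set.Ioi (M : ℝ)) 0 with hτ_def
  have hτ (M : ℕ) : IsStoppingTime ℱ (τ M) := by
    refine Adapted.isStoppingTime_hittingAfter (fun k => ?_) measurableSet_Ioi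
    exact Finset.measurable_sum _ fun j hj =>
      (hd j).mono (ℱ.mono (Nat.lt_succ_iff.1 (mem_range.1 hj))) le_rfl
  have hsum_le (M j : ℕ) (ω : Ω) (hj : (j : ℕ∞) ≤ τ M ω) :
      ∑ i ∈ range j, d i ω ≤ M := by
    cases j with
    | zero => simp
    | succ i =>
      simp only [hτ_def] at hj
      simpa using notMem_of_lt_hittingAfter ((Nat.cast_lt.2 i.lt_add_one).trans_le hj)
        (Nat.zero_le i)
  have hconv (M : ℕ) : ∀ᵐ ω ∂μ, ∃ l,
      Tendsto (fun k => MeasureTheory.stoppedProcess X (τ M) k ω + M) atTop (𝓝 l) := by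
    refine ((hX.stoppedProcess (hτ M)).add_martingale (martingale_const ℱ μ (M : ℝ)))
      |>.exists_ae_tendsto_of_nonneg fun k ω => ?_
    obtain ⟨j, hj, hjeq⟩ := exists_stoppedProcess_eq X (τ M) k ω
    simp only [Pi.add_apply, hjeq]
    linarith [hXd j ω, hsum_le M j ω hj]
  filter_upwards [hbdd, ae_all_iff.2 hconv] with ω ⟨C, hC⟩ hω
  obtain ⟨M, hM⟩ := exists_nat_ge C
  have hτ_top : τ M ω = ⊤ := hittingAfter_eq_top_iff.2 fun k _ =>
    not_lt.2 ((hC ⟨k + 1, rfl⟩).trans hM)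
  obtain ⟨l, hl⟩ := hω M
  refine ⟨l - M, (hl.sub_const (M : ℝ)).congr fun k => ?_⟩
  rw [stoppedProcess_eq_of_le (hτ_top.symm ▸ le_top : (k : ℕ∞) ≤ τ M ω), add_sub_cancel_right]

theorem exists_ae_tendsto_of_condExp_le_add [IsFiniteMeasure μ] {U d : ℕ → Ω → ℝ}
    (hU : Adapted ℱ U) (hU_int : ∀ k, Integrable (U k) μ) (hU_nonneg : ∀ k ω, 0 ≤ U k ω)
    (hd : Adapted ℱ d) (hd_int : ∀ k, Integrable (d k) μ)
    (hstep : ∀ k, μ[U (k + 1) | ℱ k] ≤ᵐ[μ] U k + d k)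
    (hd_sum : ∀ᵐ ω ∂μ, Summable fun k => d k ω) :
    ∀ᵐ ω ∂μ, ∃ l, Tendsto (fun k => U k ω) atTop (𝓝 l) := by
  set S : ℕ → Ω → ℝ := fun k ω => ∑ j ∈ range k, d j ω with hS_def
  have hS_meas {k n : ℕ} (hkn : k ≤ n + 1) : StronglyMeasurable[ℱ n] (S k) :=
    (Finset.measurable_sum _ fun j hj =>
      (hd j).mono (ℱ.mono (by grind)) le_rfl).stronglyMeasurable
  have hS_int (k : ℕ) : Integrable (S k) μ := by
    simpa [hS_def] using integrable_finsetSum (range k) fun j _ => hd_int j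
  have hX : Supermartingale (U - S) ℱ μ := by
    refine supermartingale_nat (hU.stronglyAdapted.sub fun k => hS_meas k.le_succ)
      (fun k => (hU_int k).sub (hS_int k)) fun k => ?_
    have hS_succ : μ[S (k + 1) | ℱ k] = S (k + 1) :=
      condExp_of_stronglyMeasurable (ℱ.le k) (hS_meas le_rfl) (hS_int _)
    filter_upwards [condExp_sub (hU_int (k + 1)) (hS_int (k + 1)) (ℱ k), hstep k]
      with ω h1 h2
    simp only [h1, Pi.sub_apply, hS_succ, Pi.add_apply] at h2 ⊢
    simp only [hS_def, sum_range_succ]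
    linarith
  have hlim := hX.exists_ae_tendsto_of_neg_sum_le hd
    (fun k ω => by simpa [hS_def] using hU_nonneg k ω)
    (hd_sum.mono fun ω hω => hω.hasSum.tendsto_sum_nat.bddAbove_range)
  filter_upwards [hlim, hd_sum] with ω ⟨l, hl⟩ hω
  exact ⟨l + ∑' k, d k ω, (hl.add hω.hasSum.tendsto_sum_nat).congr fun k => by simp [hS_def]⟩

theorem Integrable.div_of_one_le {f g : Ω → ℝ} (hf : Integrable f μ)
    (hg : AEStronglyMeasurable g μ) (hg_one : ∀ᵐ ω ∂μ, 1 ≤ g ω) :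
    Integrable (fun ω => f ω / g ω) μ := by
  simp only [div_eq_mul_inv]
  refine hf.mul_bdd hg.aemeasurable.inv.aestronglyMeasurable (c := 1) ?_
  filter_upwards [hg_one] with ω hω
  rw [norm_inv, Real.norm_of_nonneg (zero_le_one.trans hω)]
  exact inv_le_one_of_one_le₀ hω

variable {a b c ζ : ℕ → Ω → ℝ}

theorem Adapted.measurable_prodOneAdd (hζ : Adapted ℱ ζ) {k n : ℕ} (hkn : k ≤ n + 1) :
    Measurable[ℱ n] fun ω => prodOneAdd (ζ · ω) k := by
  unfold prodOneAdd
  exact Finset.measurable_prod _ fun j hj =>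
    measurable_const.add ((hζ j).mono (ℱ.mono (by grind)) le_rfl)

theorem Adapted.measurable_sum_div_prodOneAdd (hb : Adapted ℱ b) (hζ : Adapted ℱ ζ) {k n : ℕ}
    (hkn : k ≤ n + 1) :
    Measurable[ℱ n] fun ω => ∑ j ∈ range k, b j ω / prodOneAdd (ζ · ω) (j + 1) :=
  Finset.measurable_sum _ fun j hj =>
    ((hb j).mono (ℱ.mono (by grind)) le_rfl).div (hζ.measurable_prodOneAdd (by grind))

theorem Adapted.discountedTotal (ha : Adapted ℱ a) (hb : Adapted ℱ b) (hζ : Adapted ℱ ζ) :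
    Adapted ℱ fun k ω => _root_.discountedTotal (a · ω) (b · ω) (ζ · ω) k := fun k =>
  ((ha k).div (hζ.measurable_prodOneAdd k.le_succ)).add
    (hb.measurable_sum_div_prodOneAdd hζ k.le_succ)

theorem integrable_div_prodOneAdd {f : Ω → ℝ} (hf : Integrable f μ) (hζ : Adapted ℱ ζ)
    (hζ_nonneg : ∀ k ω, 0 ≤ ζ k ω) (j : ℕ) :
    Integrable (fun ω => f ω / prodOneAdd (ζ · ω) j) μ :=
  hf.div_of_one_le
    ((hζ.measurable_prodOneAdd j.le_succ).mono (ℱ.le j) le_rfl).aestronglyMeasurable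
    (ae_of_all _ fun ω => one_le_prodOneAdd (hζ_nonneg · ω) j)

theorem integrable_sum_div_prodOneAdd (hb_int : ∀ k, Integrable (b k) μ) (hζ : Adapted ℱ ζ)
    (hζ_nonneg : ∀ k ω, 0 ≤ ζ k ω) (k : ℕ) :
    Integrable (fun ω => ∑ j ∈ range k, b j ω / prodOneAdd (ζ · ω) (j + 1)) μ :=
  integrable_finsetSum _ fun j _ => integrable_div_prodOneAdd (hb_int j) hζ hζ_nonneg (j + 1)

theorem integrable_discountedTotal (ha_int : ∀ k, Integrable (a k) μ)
    (hb_int : ∀ k, Integrable (b k) μ) (hζ : Adapted ℱ ζ) (hζ_nonneg : ∀ k ω, 0 ≤ ζ k ω)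
    (k : ℕ) : Integrable (fun ω => discountedTotal (a · ω) (b · ω) (ζ · ω) k) μ :=
  (integrable_div_prodOneAdd (ha_int k) hζ hζ_nonneg k).add
    (integrable_sum_div_prodOneAdd hb_int hζ hζ_nonneg k)

theorem condExp_discountedTotal_succ_le [IsFiniteMeasure μ] (hb : Adapted ℱ b)
    (hζ : Adapted ℱ ζ) (hζ_nonneg : ∀ k ω, 0 ≤ ζ k ω) (ha_int : ∀ k, Integrable (a k) μ)
    (hb_int : ∀ k, Integrable (b k) μ) {k : ℕ}
    (hineq : ∀ᵐ ω ∂μ, (μ[a (k + 1) | ℱ k]) ω ≤ (1 + ζ k ω) * a k ω - b k ω + c k ω) :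
    μ[fun ω => discountedTotal (a · ω) (b · ω) (ζ · ω) (k + 1) | ℱ k] ≤ᵐ[μ]
      fun ω => discountedTotal (a · ω) (b · ω) (ζ · ω) k +
        c k ω / prodOneAdd (ζ · ω) (k + 1) := by
  set g : Ω → ℝ := fun ω => (prodOneAdd (ζ · ω) (k + 1))⁻¹
  set h : Ω → ℝ := fun ω => ∑ j ∈ range (k + 1), b j ω / prodOneAdd (ζ · ω) (j + 1)
  have hg_meas : StronglyMeasurable[ℱ k] g :=
    (hζ.measurable_prodOneAdd le_rfl).inv.stronglyMeasurable
  have hh_meas : StronglyMeasurable[ℱ k] h :=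
    (hb.measurable_sum_div_prodOneAdd hζ le_rfl).stronglyMeasurable
  have hh_int : Integrable h μ := integrable_sum_div_prodOneAdd hb_int hζ hζ_nonneg (k + 1)
  have hga_int : Integrable (g * a (k + 1)) μ := by
    simpa [g, Pi.mul_def, div_eq_inv_mul] using
      integrable_div_prodOneAdd (ha_int (k + 1)) hζ hζ_nonneg (k + 1)
  have hU_eq :
      (fun ω => discountedTotal (a · ω) (b · ω) (ζ · ω) (k + 1)) = g * a (k + 1) + h := by
    ext ω; simp [g, h, discountedTotal, div_eq_inv_mul]
  rw [hU_eq]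
  filter_upwards [condExp_add hga_int hh_int (ℱ k),
    condExp_mul_of_stronglyMeasurable_left hg_meas hga_int (ha_int (k + 1)), hineq]
    with ω h1 h2 h3
  rw [h1, Pi.add_apply, h2, condExp_of_stronglyMeasurable (ℱ.le k) hh_meas hh_int, Pi.mul_apply]
  simpa [g, h, div_eq_inv_mul] using
    div_prodOneAdd_add_sum_le (a := (a · ω)) (b := (b · ω)) (hζ_nonneg · ω) h3

end MeasureTheory

theorem robbins_siegmund_general
    {Ω : Type*} {m0 : MeasurableSpace Ω} {μ : Measure Ω} [IsProbabilityMeasure μ]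
    (ℱ : Filtration ℕ m0)
    (a b c ζ : ℕ → Ω → ℝ)
    (ha_nonneg : ∀ k ω, 0 ≤ a k ω) (hb_nonneg : ∀ k ω, 0 ≤ b k ω)
    (hc_nonneg : ∀ k ω, 0 ≤ c k ω) (hζ_nonneg : ∀ k ω, 0 ≤ ζ k ω)
    (ha_adapted : Adapted ℱ a) (hb_adapted : Adapted ℱ b)
    (hc_adapted : Adapted ℱ c) (hζ_adapted : Adapted ℱ ζ)
    (ha_int : ∀ k, Integrable (a k) μ) (hb_int : ∀ k, Integrable (b k) μ)
    (hc_int : ∀ k, Integrable (c k) μ)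
    (hineq : ∀ k, ∀ᵐ ω ∂μ,
      (μ[a (k + 1) | ℱ k]) ω ≤ (1 + ζ k ω) * a k ω - b k ω + c k ω)
    (hc_sum : ∀ᵐ ω ∂μ, Summable fun k => c k ω)
    (hζ_sum : ∀ᵐ ω ∂μ, Summable fun k => ζ k ω) :
    ∀ᵐ ω ∂μ, (∃ l : ℝ, Tendsto (fun k => a k ω) atTop (nhds l)) ∧
      Summable fun k => b k ω := by
  have hU := exists_ae_tendsto_of_condExp_le_add
    (U := fun k ω => discountedTotal (a · ω) (b · ω) (ζ · ω) k)
    (d := fun k ω => c k ω / prodOneAdd (ζ · ω) (k + 1))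
    (ha_adapted.discountedTotal hb_adapted hζ_adapted)
    (integrable_discountedTotal ha_int hb_int hζ_adapted hζ_nonneg)
    (fun k ω => discountedTotal_nonneg (ha_nonneg · ω) (hb_nonneg · ω) (hζ_nonneg · ω) k)
    (fun k => (hc_adapted k).div (hζ_adapted.measurable_prodOneAdd le_rfl))
    (fun k => integrable_div_prodOneAdd (hc_int k) hζ_adapted hζ_nonneg (k + 1))
    (fun k => condExp_discountedTotal_succ_le hb_adapted hζ_adapted hζ_nonneg ha_int hb_int
      (hineq k))
    (hc_sum.mono fun ω hω => hω.div_prodOneAdd (hc_nonneg · ω) (hζ_nonneg · ω))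
  filter_upwards [hU, hζ_sum] with ω ⟨l, hl⟩ hζω
  have hb_disc := summable_div_prodOneAdd_of_bddAbove (ha_nonneg · ω) (hb_nonneg · ω)
    (hζ_nonneg · ω) hl.bddAbove_range
  exact ⟨tendsto_of_tendsto_discountedTotal (hζ_nonneg · ω) hζω hl hb_disc,
    summable_of_summable_div_prodOneAdd (hb_nonneg · ω) (hζ_nonneg · ω) hζω hb_disc⟩

/-- Robbins–Siegmund lemma: if nonnegative adapted (integrable) random variables satisfy
`E[a^{k+1} | F^k] ≤ (1 + ζ^k) a^k − b^k + c^k` with `∑ c^k < ∞` and `∑ ζ^k < ∞` a.s.,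
then `a^k` converges a.s. (to a finite limit) and `∑ b^k < ∞` a.s. -/
theorem robbins_siegmund
    {Ω : Type*} {m0 : MeasurableSpace Ω} {μ : Measure Ω} [IsProbabilityMeasure μ]
    (ℱ : Filtration ℕ m0)
    (a b c ζ : ℕ → Ω → ℝ)
    (ha_nonneg : ∀ k ω, 0 ≤ a k ω) (hb_nonneg : ∀ k ω, 0 ≤ b k ω)
    (hc_nonneg : ∀ k ω, 0 ≤ c k ω) (hζ_nonneg : ∀ k ω, 0 ≤ ζ k ω)
    (ha_adapted : Adapted ℱ a) (hb_adapted : Adapted ℱ b)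
    (hc_adapted : Adapted ℱ c) (hζ_adapted : Adapted ℱ ζ)
    (ha_int : ∀ k, Integrable (a k) μ) (hb_int : ∀ k, Integrable (b k) μ)
    (hc_int : ∀ k, Integrable (c k) μ) (hζ_int : ∀ k, Integrable (ζ k) μ)
    (hineq : ∀ k, ∀ᵐ ω ∂μ,
      (μ[a (k + 1) | ℱ k]) ω ≤ (1 + ζ k ω) * a k ω - b k ω + c k ω)
    (hc_sum : ∀ᵐ ω ∂μ, Summable fun k => c k ω)
    (hζ_sum : ∀ᵐ ω ∂μ, Summable fun k => ζ k ω) :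
    ∀ᵐ ω ∂μ, (∃ l : ℝ, Tendsto (fun k => a k ω) atTop (nhds l)) ∧
      Summable fun k => b k ω :=
  robbins_siegmund_general ℱ a b c ζ ha_nonneg hb_nonneg hc_nonneg hζ_nonneg ha_adapted hb_adapted
    hc_adapted hζ_adapted ha_int hb_int hc_int hineq hc_sum hζ_sum
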